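/- Let K be a field of characteristic 0 and consider functions on the space of strictly upper triangular n×n matrices. For n ≥ 3 and the two-block parabolic with blocks of sizes (p, n−p) (1 ≤ p ≤ n−1), each minor M_ξ for ξ in the base S is a conjugation-invariant of the unitriangular group N, where for ξ = (a,b) ∈ S the minor M_ξ is the determinant of the submatrix of the generic nilradical matrix X with rows {a, a+1, ..., a+k} and columns {b−k, ..., b−1, b}, k = |S_ξ| being the number of base roots (i,j) with i > a and j < b. -/
import Mathlib


noncomputable section

open Matrix

variable {K : Type*} [Field K] [CharZero K]

/-- upper unitriangular matrices. -/
def IsUnitriangular {n : ℕ} (g : Matrix (Fin n) (Fin n) K) : Prop :=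
  (∀ i, g i i = 1) ∧ ∀ i j : Fin n, j < i → g i j = 0

/-- membership in the nilradical of the (p, n−p) two-block parabolic:
nonzero entries only at positions (i,j) with i ≤ p < j (1-based),
i.e. i.val < p ≤ j.val (0-based). -/
def InNilTwoBlock {n : ℕ} (p : ℕ) (Y : Matrix (Fin n) (Fin n) K) : Prop :=
  ∀ i j : Fin n, ¬ (i.val < p ∧ p ≤ j.val) → Y i j = 0

private lemma unitri_inv {n : ℕ} (g : Matrix (Fin n) (Fin n) K) (hg : IsUnitriangular g) :
    IsUnitriangular g⁻¹ := by
  have hbt : g.BlockTriangular id := fun i j h => hg.2 i j h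
  have hdet : g.det = 1 := by
    rw [Matrix.det_of_upperTriangular hbt]
    simp [hg.1]
  have hunit : IsUnit g.det := by simp [hdet]
  have : Invertible g := g.invertibleOfIsUnitDet hunit
  have hbt' : g⁻¹.BlockTriangular id :=
    Matrix.blockTriangular_inv_of_blockTriangular hbt
  refine ⟨?_, fun i k h => hbt' h⟩
  intro i
  have h1 : (g⁻¹ * g) i i = 1 := by
    rw [Matrix.nonsing_inv_mul g hunit]; simp
  rw [Matrix.mul_apply, Finset.sum_eq_single i] at h1
  · rwa [hg.1 i, mul_one] at h1
  · intro k _ hk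
    rcases lt_or_gt_of_ne hk with h | h
    · rw [hbt' (show (id k : Fin n) < id i from h), zero_mul]
    · rw [hg.2 k i h, mul_zero]
  · simp

private lemma sum_range_reindex {n j : ℕ} {c : Fin j → Fin n}
    (hc : Function.Injective c) (f : Fin n → K)
    (hf : ∀ l, l ∉ Set.range c → f l = 0) :
    ∑ l, f l = ∑ v, f (c v) := by
  rw [← Finset.sum_image (g := c) (f := f) (fun x _ y _ h => hc h)]
  refine (Finset.sum_subset (Finset.subset_univ _) ?_).symm
  intro l _ hl
  apply hf
  rintro ⟨v, rfl⟩
  exact hl (Finset.mem_image.mpr ⟨v, Finset.mem_univ _, rfl⟩)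

/-- for the two-block parabolic (p, n−p), each base minor M_ξ,
ξ = (p−j+1, p+j), — the j×j minor on rows p−j+1,...,p and columns p+1,...,p+j
(1-based) — is invariant under conjugation by the unitriangular group. -/
theorem base_minor_invariant_two_block (n p : ℕ) (hn : 3 ≤ n)
    (hp1 : 1 ≤ p) (hp2 : p ≤ n - 1)
    (j : ℕ) (hj1 : 1 ≤ j) (hjp : j ≤ p) (hjn : j ≤ n - p)
    (g Y : Matrix (Fin n) (Fin n) K)
    (hg : IsUnitriangular g) (hY : InNilTwoBlock p Y) :
    ((g⁻¹ * Y * g).submatrix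
        (fun t : Fin j => (⟨p - j + t.val, by have := t.isLt; omega⟩ : Fin n))
        (fun t : Fin j => (⟨p + t.val, by have := t.isLt; omega⟩ : Fin n))).det =
    (Y.submatrix
        (fun t : Fin j => (⟨p - j + t.val, by have := t.isLt; omega⟩ : Fin n))
        (fun t : Fin j => (⟨p + t.val, by have := t.isLt; omega⟩ : Fin n))).det := by
  have hginv := unitri_inv g hg
  set r : Fin j → Fin n := fun t => (⟨p - j + t.val, by have := t.isLt; omega⟩ : Fin n) with hr
  set c : Fin j → Fin n := fun t => (⟨p + t.val, by have := t.isLt; omega⟩ : Fin n) with hc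
  have hr_inj : Function.Injective r := by
    intro a b hab
    have := congrArg Fin.val hab
    simp only [hr] at this
    exact Fin.ext (by omega)
  have hc_inj : Function.Injective c := by
    intro a b hab
    have := congrArg Fin.val hab
    simp only [hc] at this
    exact Fin.ext (by omega)
  set A : Matrix (Fin j) (Fin j) K := fun t u => g⁻¹ (r t) (r u) with hA
  set B : Matrix (Fin j) (Fin j) K := fun v s => g (c v) (c s) with hB
  set Z : Matrix (Fin j) (Fin j) K := Y.submatrix r c with hZ
  have key : (g⁻¹ * Y * g).submatrix r c = A * Z * B := by
    ext t s
    rw [Matrix.submatrix_apply, Matrix.mul_apply, Matrix.mul_apply]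
    have hcol : ∀ l : Fin n, l ∉ Set.range c →
        (g⁻¹ * Y) (r t) l * g l (c s) = 0 := by
      intro l hl
      have hlv : l.val < p ∨ p + j ≤ l.val := by
        by_contra hcon
        push_neg at hcon
        exact hl ⟨⟨l.val - p, by omega⟩, Fin.ext (by simp [hc]; omega)⟩
      rcases hlv with h | h
      · have : (g⁻¹ * Y) (r t) l = 0 := by
          rw [Matrix.mul_apply]
          apply Finset.sum_eq_zero
          intro k _
          rw [hY k l (by omega), mul_zero]
        rw [this, zero_mul]
      · have hlt : (c s : Fin n) < l := by
          have : (c s).val = p + s.val := rfl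
          have hs := s.isLt
          exact Fin.lt_def.mpr (by omega)
        rw [hg.2 l (c s) hlt, mul_zero]
    rw [sum_range_reindex hc_inj _ hcol]
    refine Finset.sum_congr rfl fun v _ => ?_
    congr 1
    rw [Matrix.mul_apply, Matrix.mul_apply]
    have hrow : ∀ k : Fin n, k ∉ Set.range r →
        g⁻¹ (r t) k * Y k (c v) = 0 := by
      intro k hk
      have hkv : k.val < p - j ∨ p ≤ k.val := by
        by_contra hcon
        push_neg at hcon
        exact hk ⟨⟨k.val - (p - j), by omega⟩, Fin.ext (by simp [hr]; omega)⟩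
      rcases hkv with h | h
      · have hlt : k < r t := by
          have : (r t).val = p - j + t.val := rfl
          exact Fin.lt_def.mpr (by omega)
        rw [hginv.2 (r t) k hlt, zero_mul]
      · rw [hY k (c v) (by omega), mul_zero]
    rw [sum_range_reindex hr_inj _ hrow]
    rfl
  rw [key, Matrix.det_mul, Matrix.det_mul]
  have hrmono : ∀ u t : Fin j, u < t → r u < r t := by
    intro u t h
    exact Fin.lt_def.mpr (by simp [hr]; omega)
  have hcmono : ∀ u t : Fin j, u < t → c u < c t := by
    intro u t h
    exact Fin.lt_def.mpr (by simp [hc]; omega)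
  have hAdet : A.det = 1 := by
    rw [Matrix.det_of_upperTriangular (fun t u h => hginv.2 (r t) (r u) (hrmono u t h))]
    simp [hA, hginv.1]
  have hBdet : B.det = 1 := by
    rw [Matrix.det_of_upperTriangular (fun t u h => hg.2 (c t) (c u) (hcmono u t h))]
    simp [hB, hg.1]
  rw [hAdet, hBdet, one_mul, mul_one, hZ]

end
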